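/- Let p ∈ (1,2], μ a Borel probability measure, and g a positive measurable function with g² and g^{2/p} μ-integrable and μ(g^{2/p}) > 0. Then (μ(g²) − μ(g^{2/p})^p)/(p−1) ≤ (p/(2(p−1)²)) · [ μ(g²) − μ(g^{2/p})^p · (μ(g²)/μ(g^{2/p})^p)^{(2/p)−1} ]. -/

import Mathlib

/-!
Write `A = μ(g²)`, `B = μ(g^{2/p})^p` and `s = 2/p - 1 ∈ [0, 1)`. Bernoulli's inequality gives
`B (A/B)^s ≤ B + s (A - B)`, that is `A - B (A/B)^s ≥ (1 - s)(A - B) = 2(p-1)/p · (A - B)`;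
multiplying by `p / (2(p-1)²)` gives the claim.
-/

open MeasureTheory

namespace Real

theorem mul_div_rpow_le_add_mul_sub {A B s : ℝ} (hA : 0 ≤ A) (hB : 0 < B) (hs₀ : 0 ≤ s)
    (hs₁ : s ≤ 1) : B * (A / B) ^ s ≤ B + s * (A - B) := by
  have bernoulli := rpow_one_add_le_one_add_mul_self (s := A / B - 1)
    (by linarith [div_nonneg hA hB.le]) hs₀ hs₁
  rw [add_sub_cancel] at bernoulli
  calc B * (A / B) ^ s ≤ B * (1 + s * (A / B - 1)) := by gcongr
    _ = B + s * (A - B) := by field_simp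

theorem sub_div_sub_one_le_mul_sub_mul_div_rpow {A B p : ℝ} (hA : 0 ≤ A) (hB : 0 < B)
    (hp : p ∈ Set.Ioc (1 : ℝ) 2) :
    (A - B) / (p - 1) ≤ p / (2 * (p - 1) ^ 2) * (A - B * (A / B) ^ (2 / p - 1)) := by
  obtain ⟨hp₁, hp₂⟩ := hp
  have hp₀ : 0 < p := by linarith
  have hs₀ : 0 ≤ 2 / p - 1 := by rw [sub_nonneg, le_div_iff₀ hp₀]; linarith
  have hs₁ : 2 / p - 1 ≤ 1 := by rw [sub_le_iff_le_add, div_le_iff₀ hp₀]; linarith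
  have hgap : 2 * (p - 1) / p * (A - B) ≤ A - B * (A / B) ^ (2 / p - 1) := by
    have := mul_div_rpow_le_add_mul_sub hA hB hs₀ hs₁
    have hcoef : 2 * (p - 1) / p = 1 - (2 / p - 1) := by field_simp; ring
    rw [hcoef]
    linarith
  calc (A - B) / (p - 1) = p / (2 * (p - 1) ^ 2) * (2 * (p - 1) / p * (A - B)) := by
        have : p - 1 ≠ 0 := by linarith
        field_simp
    _ ≤ p / (2 * (p - 1) ^ 2) * (A - B * (A / B) ^ (2 / p - 1)) := by
        gcongr

end Real

theorem beckner_le_refined_phi_entropy_functional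
    {Ω : Type*} [MeasurableSpace Ω] (μ : Measure Ω)
    (p : ℝ) (hp : p ∈ Set.Ioc (1 : ℝ) 2)
    (g : Ω → ℝ)
    (hpos : 0 < ∫ x, g x ^ (2 / p) ∂μ) :
    ((∫ x, g x ^ (2 : ℝ) ∂μ) - (∫ x, g x ^ (2 / p) ∂μ) ^ p) / (p - 1) ≤
      p / (2 * (p - 1) ^ 2) *
        ((∫ x, g x ^ (2 : ℝ) ∂μ) - (∫ x, g x ^ (2 / p) ∂μ) ^ p *
          ((∫ x, g x ^ (2 : ℝ) ∂μ) / (∫ x, g x ^ (2 / p) ∂μ) ^ p) ^ (2 / p - 1)) := by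
  have hA : 0 ≤ ∫ x, g x ^ (2 : ℝ) ∂μ :=
    integral_nonneg fun x => by rw [Pi.zero_apply, Real.rpow_two]; positivity
  exact Real.sub_div_sub_one_le_mul_sub_mul_div_rpow hA (Real.rpow_pos_of_pos hpos p) hp
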